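/- Let (X_n) be a stochastic process adapted to a filtration (F_n) taking values in ℝ^d, let V : ℝ^d → ℝ be nonnegative, and let φ : ℝ^d → ℝ be nonnegative and continuous. Fix an integer T ≥ 1 and suppose E[V(X_{n+T}) | F_n] ≤ V(X_n) − φ(X_n) almost surely for all n. Then φ(X_n) → 0 almost surely as n → ∞. -/

import Mathlib

/-!
Put `g n := V (X n) - 𝔼[V (X (n + T)) | ℱ n]`. The drift condition gives `φ (X n) ≤ g n` a.e.,
and the tower property gives `𝔼[g n] = 𝔼[V (X n)] - 𝔼[V (X (n + T))]`. Since `V ≥ 0`, these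
expectations telescope: the partial sums of `𝔼[g n]` are bounded by `∑_{n < T} 𝔼[V (X n)]`.
A nonnegative series with summable expectations converges almost surely (monotone
convergence), so `g n → 0` a.s., and `0 ≤ φ (X n) ≤ g n` squeezes `φ (X n)` to `0`.
-/

open MeasureTheory Filter Finset Topology

lemma sum_range_sub_shift_le {b : ℕ → ℝ} (hb : ∀ n, 0 ≤ b n) (T N : ℕ) :
    ∑ n ∈ range N, (b n - b (n + T)) ≤ ∑ n ∈ range T, b n := by
  have hsplit : ∑ n ∈ range (T + N), b n = ∑ n ∈ range T, b n + ∑ n ∈ range N, b (n + T) := by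
    simp_rw [sum_range_add, add_comm _ T]
  have hmono : ∑ n ∈ range N, b n ≤ ∑ n ∈ range (T + N), b n :=
    sum_le_sum_of_subset_of_nonneg (range_subset_range.2 (Nat.le_add_left N T))
      fun n _ _ => hb n
  rw [sum_sub_distrib]
  linarith

lemma summable_of_le_sub_shift {a b : ℕ → ℝ} (ha : ∀ n, 0 ≤ a n) (hb : ∀ n, 0 ≤ b n) (T : ℕ)
    (hab : ∀ n, a n ≤ b n - b (n + T)) : Summable a :=
  summable_of_sum_range_le ha fun N =>
    (sum_le_sum fun n _ => hab n).trans (sum_range_sub_shift_le hb T N)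

lemma ae_summable_of_summable_integral {α ι : Type*} [MeasurableSpace α] {μ : Measure α}
    [Countable ι] {f : ι → α → ℝ} (hf_nonneg : ∀ i, 0 ≤ᵐ[μ] f i)
    (hf_int : ∀ i, Integrable (f i) μ) (hf_sum : Summable fun i => ∫ a, f i a ∂μ) :
    ∀ᵐ a ∂μ, Summable fun i => f i a := by
  have hmeas : ∀ i, AEMeasurable (fun a => ENNReal.ofReal (f i a)) μ := fun i =>
    (hf_int i).aemeasurable.ennreal_ofReal
  have hlintegral : ∀ i, ∫⁻ a, ENNReal.ofReal (f i a) ∂μ = ENNReal.ofReal (∫ a, f i a ∂μ) :=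
    fun i => (ofReal_integral_eq_lintegral_ofReal (hf_int i) (hf_nonneg i)).symm
  have hfin : ∫⁻ a, ∑' i, ENNReal.ofReal (f i a) ∂μ ≠ ⊤ := by
    rw [lintegral_tsum hmeas]
    simp_rw [hlintegral]
    exact hf_sum.tsum_ofReal_ne_top
  filter_upwards [ae_lt_top' (AEMeasurable.tsum hmeas) hfin, ae_all_iff.2 hf_nonneg]
    with a hsum hnonneg
  simpa only [ENNReal.toReal_ofReal (hnonneg _)] using ENNReal.summable_toReal hsum.ne

theorem finite_step_lyapunov_deterministic_general
    {Ω : Type*} {m0 : MeasurableSpace Ω} {μ : Measure Ω} [IsProbabilityMeasure μ]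
    (ℱ : Filtration ℕ m0) {d : ℕ}
    (X : ℕ → Ω → (Fin d → ℝ))
    (V : (Fin d → ℝ) → ℝ) (hVnonneg : ∀ x, 0 ≤ V x)
    (φ : (Fin d → ℝ) → ℝ) (hφnonneg : ∀ x, 0 ≤ φ x)
    (T : ℕ)
    (hVint : ∀ n, Integrable (fun ω => V (X n ω)) μ)
    (hdrift : ∀ n, ∀ᵐ ω ∂μ,
      (μ[fun ω' => V (X (n + T) ω') | ℱ n]) ω ≤ V (X n ω) - φ (X n ω)) :
    ∀ᵐ ω ∂μ, Tendsto (fun n => φ (X n ω)) atTop (nhds 0) := by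
  set g : ℕ → Ω → ℝ := fun n => (fun ω => V (X n ω)) - μ[fun ω' => V (X (n + T) ω') | ℱ n]
  have hφ_le_g : ∀ n, ∀ᵐ ω ∂μ, φ (X n ω) ≤ g n ω := fun n => by
    filter_upwards [hdrift n] with ω h
    simp only [g, Pi.sub_apply]
    linarith
  have hg_nonneg : ∀ n, 0 ≤ᵐ[μ] g n := fun n => by
    filter_upwards [hφ_le_g n] with ω h
    exact (hφnonneg _).trans h
  have hg_int : ∀ n, Integrable (g n) μ := fun n => (hVint n).sub integrable_condExp
  have hg_integral : ∀ n, ∫ ω, g n ω ∂μ = ∫ ω, V (X n ω) ∂μ - ∫ ω, V (X (n + T) ω) ∂μ :=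
    fun n => (integral_sub (hVint n) integrable_condExp).trans (by rw [integral_condExp (ℱ.le n)])
  have hg_sum : Summable fun n => ∫ ω, g n ω ∂μ :=
    summable_of_le_sub_shift (fun n => integral_nonneg_of_ae (hg_nonneg n))
      (fun n => integral_nonneg fun ω => hVnonneg _) T (fun n => (hg_integral n).le)
  filter_upwards [ae_summable_of_summable_integral hg_nonneg hg_int hg_sum,
    ae_all_iff.2 hφ_le_g] with ω hsum hle
  exact tendsto_of_tendsto_of_tendsto_of_le_of_le tendsto_const_nhds hsum.tendsto_atTop_zero
    (fun n => hφnonneg _) hle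

theorem finite_step_lyapunov_deterministic
    {Ω : Type*} {m0 : MeasurableSpace Ω} {μ : Measure Ω} [IsProbabilityMeasure μ]
    (ℱ : Filtration ℕ m0) {d : ℕ}
    (X : ℕ → Ω → (Fin d → ℝ)) (hadapted : Adapted ℱ X)
    (V : (Fin d → ℝ) → ℝ) (hVnonneg : ∀ x, 0 ≤ V x)
    (φ : (Fin d → ℝ) → ℝ) (hφcont : Continuous φ) (hφnonneg : ∀ x, 0 ≤ φ x)
    (T : ℕ) (hT : 1 ≤ T)
    (hVint : ∀ n, Integrable (fun ω => V (X n ω)) μ)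
    (hdrift : ∀ n, ∀ᵐ ω ∂μ,
      (μ[fun ω' => V (X (n + T) ω') | ℱ n]) ω ≤ V (X n ω) - φ (X n ω)) :
    ∀ᵐ ω ∂μ, Tendsto (fun n => φ (X n ω)) atTop (nhds 0) :=
  finite_step_lyapunov_deterministic_general ℱ X V hVnonneg φ hφnonneg T hVint hdrift
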